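/- arXiv:1112.0280 — 2 statements merged into one kernel-verified Lean document; each statement's English description precedes it below -/
import Mathlib

section
/- Let (B, L) be a Banach SNL space with Banach SNL dual (B*, L̃), A a norm-closed linear L-positive subspace of B such that the polar subspace A⁰ is L̃-negative. Then for every d ∈ B, with C := A − d, inf_{c ∈ C} [q_L(c) + (1/2)‖c‖²] ≤ 0. -/
/-!
Suppose `k := inf_{a ∈ A} Φ(a - d) > 0`, where `Φ(c) = q_L(c) + ½‖c‖²`, and let `c₀ = a₀ - d` be an
`ε²`-minimiser. Since `|q_L(h)| ≤ ½‖h‖²`, the functional `-L c₀` is dominated on `A` by the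
sublinear function generated by `u ↦ ½(‖c₀ + u‖² + ‖u‖² - ‖c₀‖²) + ε²`; by Hahn–Banach it extends
to `φ ∈ B*` with `‖φ‖ ≤ ‖c₀‖ + 2ε` and `φ(c₀) ≥ ‖c₀‖² - O(ε)`. Then `L c₀ + φ ∈ A⁰`, and expanding
`q_{L̃}(L c₀ + φ) ≤ 0` with `L̃(L c₀) = ĉ₀` gives `Φ(c₀) = O(ε)`. Positivity of `q_L` on `A` keeps
`‖c₀‖` bounded as `ε → 0`, so `k ≤ 0`.
-/

open NormedSpace

noncomputable def qL {B : Type*} [NormedAddCommGroup B] [NormedSpace ℝ B]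
    (L : B →L[ℝ] StrongDual ℝ B) (b : B) : ℝ := (1 / 2) * L b b

noncomputable def homogenization {E : Type*} [AddCommGroup E] [Module ℝ E] (G : E → ℝ) (h : E) :
    ℝ :=
  ⨅ t : Set.Ioi (0 : ℝ), G ((t : ℝ) • h) / t

section Homogenization

variable {E : Type*} [AddCommGroup E] [Module ℝ E] {G : E → ℝ}

lemma homogenization_le {h : E}
    (hG : BddBelow (Set.range fun t : Set.Ioi (0 : ℝ) => G ((t : ℝ) • h) / t))
    {t : ℝ} (ht : 0 < t) : homogenization G h ≤ G (t • h) / t :=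
  ciInf_le hG ⟨t, ht⟩

variable (hG : ∀ h, BddBelow (Set.range fun t : Set.Ioi (0 : ℝ) => G ((t : ℝ) • h) / t))
include hG

lemma homogenization_smul {c : ℝ} (hc : 0 < c) (h : E) :
    homogenization G (c • h) = c * homogenization G h := by
  have hquot : ∀ t : ℝ, 0 < t → G (t • c • h) / t = c * (G ((t * c) • h) / (t * c)) := by
    intro t ht
    rw [smul_smul]
    field_simp
  apply le_antisymm
  · rw [← div_le_iff₀' hc]
    refine le_ciInf fun ⟨t, ht⟩ => ?_
    have ht' : 0 < t / c := div_pos ht hc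
    rw [div_le_iff₀' hc]
    calc homogenization G (c • h) ≤ G ((t / c) • c • h) / (t / c) := homogenization_le (hG _) ht'
      _ = c * (G (t • h) / t) := by rw [hquot _ ht', div_mul_cancel₀ _ hc.ne']
  · refine le_ciInf fun ⟨t, ht⟩ => ?_
    rw [hquot t ht]
    exact mul_le_mul_of_nonneg_left (homogenization_le (hG h) (mul_pos ht hc)) hc.le

lemma homogenization_zero : homogenization G (0 : E) = 0 := by
  have h2 := homogenization_smul hG two_pos (0 : E)
  rw [smul_zero] at h2
  linarith

lemma homogenization_add (hconv : ConvexOn ℝ Set.univ G) (x y : E) :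
    homogenization G (x + y) ≤ homogenization G x + homogenization G y := by
  refine le_ciInf_add_ciInf fun ⟨t₁, ht₁⟩ ⟨t₂, ht₂⟩ => ?_
  simp only [Set.mem_Ioi] at ht₁ ht₂
  have hsum : 0 < t₁ + t₂ := add_pos ht₁ ht₂
  -- `t` is half the harmonic mean of `t₁, t₂`, so that `t • (x + y)` is a convex combination
  -- of `t₁ • x` and `t₂ • y`
  set t := t₁ * t₂ / (t₁ + t₂)
  have hcomb : t • (x + y) = (t₂ / (t₁ + t₂)) • (t₁ • x) + (t₁ / (t₁ + t₂)) • (t₂ • y) := by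
    rw [smul_smul, smul_smul, smul_add]
    congr 2 <;> ring
  have hconvex := hconv.2 (Set.mem_univ (t₁ • x)) (Set.mem_univ (t₂ • y))
    (by positivity : 0 ≤ t₂ / (t₁ + t₂)) (by positivity : 0 ≤ t₁ / (t₁ + t₂))
    (by field_simp; ring)
  calc homogenization G (x + y) ≤ G (t • (x + y)) / t := homogenization_le (hG _) (by positivity)
    _ ≤ (t₂ / (t₁ + t₂) * G (t₁ • x) + t₁ / (t₁ + t₂) * G (t₂ • y)) / t := by
      rw [hcomb]
      gcongr
      exact hconvex
    _ = G (t₁ • x) / t₁ + G (t₂ • y) / t₂ := by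
      simp only [t]
      field_simp

end Homogenization

theorem exists_dual_extension_of_le_sublinear {E : Type*} [NormedAddCommGroup E]
    [NormedSpace ℝ E] (f : E →ₗ.[ℝ] ℝ) (N : E → ℝ)
    (N_hom : ∀ c : ℝ, 0 < c → ∀ x, N (c • x) = c * N x) (N_add : ∀ x y, N (x + y) ≤ N x + N y)
    (hf : ∀ x : f.domain, f x ≤ N x) {C : ℝ} (hC : 0 ≤ C) (hN : ∀ x, N x ≤ C * ‖x‖) :
    ∃ φ : StrongDual ℝ E, (∀ x : f.domain, φ x = f x) ∧ (∀ x, φ x ≤ N x) ∧ ‖φ‖ ≤ C := by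
  obtain ⟨g, hgf, hgN⟩ := exists_extension_of_le_sublinear f N N_hom N_add hf
  have hbound : ∀ x, ‖g x‖ ≤ C * ‖x‖ := by
    intro x
    have hneg := (hgN (-x)).trans (hN (-x))
    rw [map_neg, norm_neg] at hneg
    exact abs_le.mpr ⟨by linarith, (hgN x).trans (hN x)⟩
  exact ⟨g.mkContinuous C hbound, hgf, hgN, g.mkContinuous_norm_le hC hbound⟩

section SqNormGap

variable {B : Type*} [NormedAddCommGroup B]

/-- An upper bound for `Φ(c + u) - Φ(c) + ε² - L c u`, where `Φ(c) = q_L(c) + ½‖c‖²`,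
valid as soon as `|q_L(u)| ≤ ½‖u‖²`. -/
noncomputable def sqNormGap (c : B) (ε : ℝ) (u : B) : ℝ :=
  (‖c + u‖ ^ 2 + ‖u‖ ^ 2 - ‖c‖ ^ 2) / 2 + ε ^ 2

lemma neg_mul_norm_le_sqNormGap (c : B) (ε : ℝ) (u : B) :
    -(‖c‖ * ‖u‖) ≤ sqNormGap c ε u := by
  have htri : ‖c‖ ≤ ‖c + u‖ + ‖u‖ := by
    simpa using norm_sub_le (c + u) u
  unfold sqNormGap
  rcases le_total ‖c‖ ‖u‖ with hcu | hcu
  · nlinarith [norm_nonneg c, sq_nonneg (‖c + u‖), sq_nonneg ε]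
  · have hdiff : (‖c‖ - ‖u‖) ^ 2 ≤ ‖c + u‖ ^ 2 :=
      pow_le_pow_left₀ (by linarith) (by linarith) 2
    nlinarith [norm_nonneg u, norm_nonneg c, sq_nonneg ε]

variable [NormedSpace ℝ B]

lemma convexOn_sqNormGap (c : B) (ε : ℝ) : ConvexOn ℝ Set.univ (sqNormGap c ε) := by
  have hsq : ConvexOn ℝ Set.univ (fun u : B => ‖u‖ ^ 2) :=
    convexOn_univ_norm.pow (fun _ _ => norm_nonneg _) 2
  refine ⟨convex_univ, fun x _ y _ a b ha hb hab => ?_⟩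
  have hshift : c + (a • x + b • y) = a • (c + x) + b • (c + y) := by
    rw [smul_add, smul_add, ← add_assoc, add_add_add_comm, ← add_smul, hab, one_smul, add_assoc]
  have h₁ := hsq.2 (Set.mem_univ (c + x)) (Set.mem_univ (c + y)) ha hb hab
  have h₂ := hsq.2 (Set.mem_univ x) (Set.mem_univ y) ha hb hab
  simp only [smul_eq_mul] at h₁ h₂ ⊢
  rw [← hshift] at h₁
  unfold sqNormGap
  nlinarith

lemma bddBelow_sqNormGap (c : B) (ε : ℝ) (h : B) :
    BddBelow (Set.range fun t : Set.Ioi (0 : ℝ) => sqNormGap c ε ((t : ℝ) • h) / t) := by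
  refine ⟨-(‖c‖ * ‖h‖), ?_⟩
  rintro _ ⟨⟨t, ht⟩, rfl⟩
  have ht : 0 < t := ht
  rw [le_div_iff₀ ht]
  have := neg_mul_norm_le_sqNormGap c ε (t • h)
  rw [norm_smul, Real.norm_of_nonneg ht.le] at this
  linarith

lemma homogenization_sqNormGap_le (c : B) {ε : ℝ} (hε : 0 < ε) (h : B) :
    homogenization (sqNormGap c ε) h ≤ (‖c‖ + 2 * ε) * ‖h‖ := by
  rcases eq_or_ne h 0 with rfl | hh
  · simp [homogenization_zero (bddBelow_sqNormGap c ε)]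
  have hh : 0 < ‖h‖ := norm_pos_iff.mpr hh
  have ht : 0 < ε / ‖h‖ := div_pos hε hh
  have hth : ‖(ε / ‖h‖) • h‖ = ε := by
    rw [norm_smul, Real.norm_of_nonneg ht.le, div_mul_cancel₀ _ hh.ne']
  have hnorm : ‖c + (ε / ‖h‖) • h‖ ≤ ‖c‖ + ε := (norm_add_le _ _).trans_eq (by rw [hth])
  refine (homogenization_le (bddBelow_sqNormGap c ε h) ht).trans ?_
  rw [div_le_iff₀ ht, sqNormGap, hth]
  have hrhs : (‖c‖ + 2 * ε) * ‖h‖ * (ε / ‖h‖) = ε * ‖c‖ + 2 * ε ^ 2 := by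
    field_simp
  rw [hrhs]
  nlinarith [norm_nonneg (c + (ε / ‖h‖) • h), norm_nonneg c]

lemma homogenization_sqNormGap_neg_self_le (c : B) {ε : ℝ} (hε : 0 < ε) :
    homogenization (sqNormGap c ε) (-c) ≤ -‖c‖ ^ 2 + 2 * ε * ‖c‖ + ε := by
  have hpos : 0 < ‖c‖ + 1 := by positivity
  set t := ε / (‖c‖ + 1)
  have ht : 0 < t := div_pos hε hpos
  have htc : t * (‖c‖ + 1) = ε := div_mul_cancel₀ _ hpos.ne'
  refine (homogenization_le (bddBelow_sqNormGap c ε (-c)) ht).trans ?_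
  have hsub : c + t • -c = (1 - t) • c := by
    rw [smul_neg, sub_smul, one_smul, sub_eq_add_neg]
  rw [div_le_iff₀ ht, sqNormGap, hsub, norm_smul, norm_smul, norm_neg, Real.norm_eq_abs,
    Real.norm_of_nonneg ht.le, mul_pow, sq_abs]
  nlinarith [norm_nonneg c, mul_nonneg ht.le (norm_nonneg c)]

end SqNormGap

section QuadraticForm

variable {B : Type*} [NormedAddCommGroup B] [NormedSpace ℝ B] {L : B →L[ℝ] StrongDual ℝ B}

lemma qL_add (hsym : ∀ b c : B, L c b = L b c) (b c : B) :
    qL L (b + c) = qL L b + L b c + qL L c := by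
  simp only [qL, map_add, add_apply, hsym b c]
  ring

lemma abs_apply_apply_le (hL : ‖L‖ ≤ 1) (b c : B) : |L b c| ≤ ‖b‖ * ‖c‖ :=
  calc |L b c| ≤ ‖L b‖ * ‖c‖ := (L b).le_opNorm c
    _ ≤ ‖L‖ * ‖b‖ * ‖c‖ := by gcongr; exact L.le_opNorm b
    _ ≤ ‖b‖ * ‖c‖ := by gcongr; exact mul_le_of_le_one_left (norm_nonneg b) hL

lemma abs_qL_le (hL : ‖L‖ ≤ 1) (b : B) : |qL L b| ≤ 1 / 2 * ‖b‖ ^ 2 := by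
  rw [qL, abs_mul, abs_of_pos one_half_pos, sq]
  gcongr
  exact abs_apply_apply_le hL b b

lemma qL_dual_add {Lt : StrongDual ℝ B →L[ℝ] StrongDual ℝ (StrongDual ℝ B)}
    (hsymt : ∀ p q : StrongDual ℝ B, Lt q p = Lt p q)
    (hdual : ∀ b : B, Lt (L b) = inclusionInDoubleDual ℝ B b)
    (c : B) (φ : StrongDual ℝ B) : qL Lt (L c + φ) = qL L c + φ c + qL Lt φ := by
  rw [qL_add hsymt, hdual, dual_def]
  simp only [qL, hdual, dual_def]

lemma norm_sub_sq_le (hL : ‖L‖ ≤ 1) (hsym : ∀ b c : B, L c b = L b c) {a : B}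
    (ha : 0 ≤ qL L a) (d : B) :
    ‖a - d‖ ^ 2 ≤ 4 * (qL L (a - d) + 1 / 2 * ‖a - d‖ ^ 2) + 10 * ‖d‖ ^ 2 := by
  have hexp := qL_add hsym a (-d)
  rw [← sub_eq_add_neg] at hexp
  have hcross := abs_le.mp (abs_apply_apply_le hL a (-d))
  have hqd := abs_le.mp (abs_qL_le hL (-d))
  have htri : ‖a‖ ≤ ‖a - d‖ + ‖d‖ := by simpa using norm_add_le (a - d) d
  rw [norm_neg] at hcross hqd
  nlinarith [norm_nonneg a, norm_nonneg d, norm_nonneg (a - d), sq_nonneg (‖a - d‖ - 2 * ‖d‖)]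

lemma neg_apply_le_sqNormGap (hL : ‖L‖ ≤ 1) (hsym : ∀ b c : B, L c b = L b c) {c u : B} {ε : ℝ}
    (hu : qL L c + 1 / 2 * ‖c‖ ^ 2 - ε ^ 2 ≤ qL L (c + u) + 1 / 2 * ‖c + u‖ ^ 2) :
    -(L c u) ≤ sqNormGap c ε u := by
  rw [qL_add hsym] at hu
  have hqu := abs_le.mp (abs_qL_le hL u)
  unfold sqNormGap
  linarith [hqu.2]

end QuadraticForm

lemma le_zero_of_forall_le_mul {k C : ℝ} (h : ∀ ε : ℝ, 0 < ε → ε ≤ 1 → k ≤ ε * C) : k ≤ 0 := by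
  by_contra! hk
  have hC : 0 < C := by nlinarith [h 1 one_pos le_rfl]
  have hε : 0 < min 1 (k / (2 * C)) := by positivity
  have hsmall : min 1 (k / (2 * C)) * C ≤ k / 2 :=
    calc _ ≤ k / (2 * C) * C := by gcongr; exact min_le_right _ _
      _ = k / 2 := by field_simp
  linarith [h _ hε (min_le_left _ _)]

lemma sub_le_apply_add_of_lt_iInf_add {B : Type*} [AddCommGroup B] [Module ℝ B]
    {A : Submodule ℝ B} {Φ : B → ℝ} {d : B} (hbdd : BddBelow (Set.range fun a : A => Φ (a - d)))
    {a₀ : A} {δ : ℝ} (ha₀ : Φ (a₀ - d) < (⨅ a : A, Φ (a - d)) + δ) (h : B) (hh : h ∈ A) :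
    Φ (a₀ - d) - δ ≤ Φ (a₀ - d + h) := by
  have hcoe : ((a₀ + ⟨h, hh⟩ : A) : B) - d = (a₀ : B) - d + h := by
    rw [Submodule.coe_add]
    abel
  have hinf := ciInf_le hbdd (a₀ + ⟨h, hh⟩)
  simp only [hcoe] at hinf
  linarith

theorem qL_add_half_sq_norm_le_of_almost_min {B : Type*} [NormedAddCommGroup B] [NormedSpace ℝ B]
    {L : B →L[ℝ] StrongDual ℝ B} (hL : ‖L‖ ≤ 1) (hsym : ∀ b c : B, L c b = L b c)
    {Lt : StrongDual ℝ B →L[ℝ] StrongDual ℝ (StrongDual ℝ B)}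
    (hLt : ∀ p : StrongDual ℝ B, |qL Lt p| ≤ 1 / 2 * ‖p‖ ^ 2)
    (hsymt : ∀ p q : StrongDual ℝ B, Lt q p = Lt p q)
    (hdual : ∀ b : B, Lt (L b) = inclusionInDoubleDual ℝ B b)
    {A : Subspace ℝ B} (hneg : ∀ b' : StrongDual ℝ B, (∀ a ∈ A, b' a = 0) → qL Lt b' ≤ 0)
    {c : B} {ε : ℝ} (hε : 0 < ε)
    (hmin : ∀ h ∈ A, qL L c + 1 / 2 * ‖c‖ ^ 2 - ε ^ 2 ≤ qL L (c + h) + 1 / 2 * ‖c + h‖ ^ 2) :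
    qL L c + 1 / 2 * ‖c‖ ^ 2 ≤ ε * (4 * ‖c‖ + 1 + 2 * ε) := by
  have hbdd := bddBelow_sqNormGap c ε
  have hslope : ∀ h ∈ A, -(L c h) ≤ homogenization (sqNormGap c ε) h := by
    intro h hh
    refine le_ciInf fun ⟨t, ht⟩ => ?_
    have ht : 0 < t := ht
    have hu := neg_apply_le_sqNormGap hL hsym (hmin _ (A.smul_mem t hh))
    rw [map_smul, smul_eq_mul] at hu
    rw [le_div_iff₀ ht]
    linarith
  obtain ⟨φ, hφA, hφN, hφnorm⟩ := exists_dual_extension_of_le_sublinear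
    ⟨A, ((-L c : StrongDual ℝ B) : B →ₗ[ℝ] ℝ).comp A.subtype⟩ _
    (fun _ hr => homogenization_smul hbdd hr) (homogenization_add hbdd (convexOn_sqNormGap c ε))
    (fun x => hslope x x.2) (by positivity) (homogenization_sqNormGap_le c hε)
  have hpolar : ∀ a ∈ A, (L c + φ) a = 0 := by
    intro a ha
    simp [hφA ⟨a, ha⟩]
  have hφc : ‖c‖ ^ 2 - 2 * ε * ‖c‖ - ε ≤ φ c := by
    have hneg_c := (hφN (-c)).trans (homogenization_sqNormGap_neg_self_le c hε)
    rw [map_neg] at hneg_c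
    linarith
  have hq := hneg _ hpolar
  rw [qL_dual_add hsymt hdual] at hq
  have hqφ := (abs_le.mp (hLt φ)).1
  have hφsq : ‖φ‖ ^ 2 ≤ (‖c‖ + 2 * ε) ^ 2 := pow_le_pow_left₀ (norm_nonneg _) hφnorm 2
  nlinarith

theorem stmt12_general {B : Type*} [NormedAddCommGroup B] [NormedSpace ℝ B]
    (L : B →L[ℝ] StrongDual ℝ B) (hL : ‖L‖ ≤ 1)
    (hsym : ∀ b c : B, L c b = L b c)
    (Lt : StrongDual ℝ B →L[ℝ] StrongDual ℝ (StrongDual ℝ B)) (hLt : @Norm.norm _ (ContinuousLinearMap.hasOpNorm (𝕜 := ℝ) (𝕜₂ := ℝ) (σ₁₂ := RingHom.id ℝ)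
      (E := StrongDual ℝ B) (F := StrongDual ℝ (StrongDual ℝ B))) Lt ≤ 1)
    (hsymt : ∀ p q : StrongDual ℝ B, Lt q p = Lt p q)
    (hdual : ∀ b : B, Lt (L b) = inclusionInDoubleDual ℝ B b)
    (A : Subspace ℝ B)
    (hpos : ∀ a ∈ A, 0 ≤ qL L a)
    (hneg : ∀ b' : StrongDual ℝ B, (∀ a ∈ A, b' a = 0) → qL Lt b' ≤ 0) :
    -- with `C := A − d`, `inf_{c ∈ C} [q_L(c) + (1/2)‖c‖²] ≤ 0`
    ∀ d : B, ⨅ a : A, (qL L ((a : B) - d) + (1 / 2) * ‖(a : B) - d‖ ^ 2) ≤ 0 := by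
  intro d
  set Φ : B → ℝ := fun c => qL L c + 1 / 2 * ‖c‖ ^ 2
  show ⨅ a : A, Φ (a - d) ≤ 0
  have hΦ : ∀ c, 0 ≤ Φ c := fun c => by
    have hq := (abs_le.mp (abs_qL_le hL c)).1
    simp only [Φ]
    linarith
  have hbdd : BddBelow (Set.range fun a : A => Φ (a - d)) :=
    ⟨0, Set.forall_mem_range.2 fun a => hΦ _⟩
  set k := ⨅ a : A, Φ (a - d)
  refine le_zero_of_forall_le_mul (C := 8 * k + 20 * ‖d‖ ^ 2 + 13) fun ε hε hε1 => ?_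
  obtain ⟨a₀, ha₀⟩ := exists_lt_of_ciInf_lt (lt_add_of_pos_right k (pow_pos hε 2))
  have hbound : Φ (a₀ - d) ≤ ε * (4 * ‖(a₀ : B) - d‖ + 1 + 2 * ε) :=
    qL_add_half_sq_norm_le_of_almost_min hL hsym (abs_qL_le hLt) hsymt hdual hneg hε
      (sub_le_apply_add_of_lt_iInf_add hbdd ha₀)
  have hnorm : ‖(a₀ : B) - d‖ ^ 2 ≤ 4 * Φ (a₀ - d) + 10 * ‖d‖ ^ 2 :=
    norm_sub_sq_le hL hsym (hpos _ a₀.2) d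
  have hinf : k ≤ Φ (a₀ - d) := ciInf_le hbdd a₀
  have hnorm_le : 4 * ‖(a₀ : B) - d‖ + 1 + 2 * ε ≤ 8 * k + 20 * ‖d‖ ^ 2 + 13 := by
    nlinarith [sq_nonneg (‖(a₀ : B) - d‖ - 1)]
  exact hinf.trans (hbound.trans (mul_le_mul_of_nonneg_left hnorm_le hε.le))

theorem stmt12 {B : Type*} [NormedAddCommGroup B] [NormedSpace ℝ B] [CompleteSpace B]
    [Nontrivial B]
    (L : B →L[ℝ] StrongDual ℝ B) (hL : ‖L‖ ≤ 1)
    (hsym : ∀ b c : B, L c b = L b c)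
    (Lt : StrongDual ℝ B →L[ℝ] StrongDual ℝ (StrongDual ℝ B)) (hLt : @Norm.norm _ (ContinuousLinearMap.hasOpNorm (𝕜 := ℝ) (𝕜₂ := ℝ) (σ₁₂ := RingHom.id ℝ)
      (E := StrongDual ℝ B) (F := StrongDual ℝ (StrongDual ℝ B))) Lt ≤ 1)
    (hsymt : ∀ p q : StrongDual ℝ B, Lt q p = Lt p q)
    (hdual : ∀ b : B, Lt (L b) = inclusionInDoubleDual ℝ B b)
    (A : Subspace ℝ B) (hclosed : IsClosed (A : Set B))
    (hpos : ∀ a ∈ A, 0 ≤ qL L a)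
    (hneg : ∀ b' : StrongDual ℝ B, (∀ a ∈ A, b' a = 0) → qL Lt b' ≤ 0) :
    -- with `C := A − d`, `inf_{c ∈ C} [q_L(c) + (1/2)‖c‖²] ≤ 0`
    ∀ d : B, ⨅ a : A, (qL L ((a : B) - d) + (1 / 2) * ‖(a : B) - d‖ ^ 2) ≤ 0 :=
  stmt12_general L hL hsym Lt hLt hsymt hdual A hpos hneg
end

section
/- Let (B, L) be a Banach SNL space with Banach SNL dual (B*, L̃), and A a norm-closed linear L-positive subspace of B such that A⁰ is L̃-negative. Then A is maximally L-positive. -/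
open NormedSpace

def LPositive {B : Type*} [NormedAddCommGroup B] [NormedSpace ℝ B]
    (L : B →L[ℝ] StrongDual ℝ B) (A : Set B) : Prop :=
  A.Nonempty ∧ ∀ b ∈ A, ∀ c ∈ A, 0 ≤ qL L (b - c)

def MaxLPositive {B : Type*} [NormedAddCommGroup B] [NormedSpace ℝ B]
    (L : B →L[ℝ] StrongDual ℝ B) (A : Set B) : Prop :=
  LPositive L A ∧ ∀ A' : Set B, LPositive L A' → A ⊆ A' → A' = A

/-!
Suppose `qL L (b - a) ≥ 0` for all `a ∈ A` but `b ∉ A`, and pick `u ∈ A⁰` with `u b ≠ 0`.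
Steepest descent for `s ↦ qL L (b - s)` on `A`, controlled by the potential
`qL L (b - s) + η / 4 * log (1 + ‖b - s‖)`, finds `s ∈ A` at which `L (b - s)` is small on `A`
even after multiplying by `1 + ‖b - s‖`. Subtracting a norm-preserving Hahn–Banach extension of
its restriction to `A` gives `w ∈ A⁰` with `qL Lt w` almost nonnegative and `Lt w u` close to
`u b`. As `qL Lt ≤ 0` on the plane spanned by `w` and `u` in `A⁰`, the discriminant bound
`(Lt w u)² ≤ 4 * qL Lt w * qL Lt u` then forces `u b = 0`.
-/

open StrongDual

-- Norm bounds on `L` and `Lt` are passed pointwise, in the form below: instance search does not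
-- find the operator norm on `StrongDual ℝ E →L[ℝ] StrongDual ℝ (StrongDual ℝ E)`.
theorem ContinuousLinearMap.norm_apply_apply_le_of_norm_le_one {E F G : Type*}
    [SeminormedAddCommGroup E] [SeminormedAddCommGroup F] [SeminormedAddCommGroup G]
    [NormedSpace ℝ E] [NormedSpace ℝ F] [NormedSpace ℝ G] (f : E →L[ℝ] F →L[ℝ] G)
    (hf : ‖f‖ ≤ 1) (x : E) (y : F) : ‖f x y‖ ≤ ‖x‖ * ‖y‖ := by
  simpa using f.le_of_opNorm₂_le_of_le hf le_rfl le_rfl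

section QuadraticForm

variable {E : Type*} [NormedAddCommGroup E] [NormedSpace ℝ E] {T : E →L[ℝ] StrongDual ℝ E}

theorem qL_add_smul (hT : ∀ x y : E, T y x = T x y) (x y : E) (t : ℝ) :
    qL T (x + t • y) = qL T x + t * T x y + t ^ 2 * qL T y := by
  simp only [qL, map_add, map_smul, add_apply, smul_apply, smul_eq_mul]
  rw [hT x y]
  ring

theorem abs_qL_le_s14 (hT : ∀ x y : E, ‖T x y‖ ≤ ‖x‖ * ‖y‖) (z : E) :
    |qL T z| ≤ ‖z‖ ^ 2 / 2 := by
  have h := hT z z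
  rw [Real.norm_eq_abs] at h
  rw [qL, abs_mul, abs_of_pos (by norm_num : (0 : ℝ) < 1 / 2)]
  nlinarith

theorem sq_apply_le_four_mul_qL (hT : ∀ x y : E, T y x = T x y) {w u : E}
    (h : ∀ t : ℝ, qL T (w + t • u) ≤ 0) : T w u ^ 2 ≤ 4 * qL T w * qL T u := by
  have hquad : ∀ t : ℝ, 0 ≤ -qL T u * (t * t) + -T w u * t + -qL T w := by
    intro t
    have := h t
    rw [qL_add_smul hT] at this
    nlinarith
  have := discrim_le_zero hquad
  rw [discrim] at this
  linarith

end QuadraticForm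

theorem false_of_uniform_descent {X : Type*} {S : Set X} {P : X → ℝ} (hP : ∀ x ∈ S, 0 ≤ P x)
    {x₀ : X} (hx₀ : x₀ ∈ S) {κ : ℝ} (hκ : 0 < κ)
    (hdesc : ∀ x ∈ S, P x ≤ P x₀ → ∃ y ∈ S, P y ≤ P x - κ) : False := by
  have hiter : ∀ n : ℕ, ∃ x ∈ S, P x ≤ P x₀ - n * κ := by
    intro n
    induction n with
    | zero => exact ⟨x₀, hx₀, by simp⟩
    | succ n ih =>
      obtain ⟨x, hx, hPx⟩ := ih
      obtain ⟨y, hy, hPy⟩ := hdesc x hx (by nlinarith [n.cast_nonneg (α := ℝ)])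
      exact ⟨y, hy, by push_cast; linarith⟩
  obtain ⟨n, hn⟩ := exists_nat_gt (P x₀ / κ)
  obtain ⟨x, hx, hPx⟩ := hiter n
  rw [div_lt_iff₀ hκ] at hn
  linarith [hP x hx]

theorem Real.log_le_log_add_sub_div {x y : ℝ} (hx : 0 < x) (hy : 0 < y) :
    Real.log y ≤ Real.log x + (y - x) / x := by
  have := Real.log_le_sub_one_of_pos (div_pos hy hx)
  rw [Real.log_div hy.ne' hx.ne'] at this
  rw [sub_div, div_self hx.ne']
  linarith

section Descent

variable {E : Type*} [NormedAddCommGroup E] [NormedSpace ℝ E] {L : E →L[ℝ] StrongDual ℝ E}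
  {A : Submodule ℝ E} {b : E}

theorem exists_descent_step (hL : ∀ x y : E, ‖L x y‖ ≤ ‖x‖ * ‖y‖)
    (hsym : ∀ x y : E, L y x = L x y) {s : E} (hs : s ∈ A) {ρ : ℝ}
    (hρ : ρ < ‖(L (b - s)).comp A.subtypeL‖) :
    ∃ s' ∈ A, ∃ c : ℝ, ρ < c ∧ qL L (b - s') ≤ qL L (b - s) - c ^ 2 / 2 ∧
      ‖b - s'‖ ≤ ‖b - s‖ + c := by
  obtain ⟨x, hx1, hρx⟩ := ((L (b - s)).comp A.subtypeL).exists_lt_apply_of_lt_opNorm hρ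
  set c := ‖L (b - s) x‖
  obtain ⟨a, haA, ha1, hac⟩ : ∃ a ∈ A, ‖a‖ ≤ 1 ∧ L (b - s) a = c := by
    rcases le_total 0 (L (b - s) x) with h | h
    · exact ⟨x, x.2, hx1.le, (Real.norm_of_nonneg h).symm⟩
    · refine ⟨-x, A.neg_mem x.2, by simpa using hx1.le, ?_⟩
      rw [map_neg]; exact (Real.norm_of_nonpos h).symm
  have hc : 0 ≤ c := norm_nonneg _
  refine ⟨s + c • a, A.add_mem hs (A.smul_mem c haA), c, hρx, ?_, ?_⟩
  · have hqa : qL L a ≤ 1 / 2 := by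
      have := (abs_le.1 (abs_qL_le_s14 hL a)).2
      nlinarith [norm_nonneg a]
    rw [show b - (s + c • a) = (b - s) + (-c) • a by module, qL_add_smul hsym, hac]
    nlinarith
  · calc ‖b - (s + c • a)‖ = ‖(b - s) - c • a‖ := by rw [sub_add_eq_sub_sub]
      _ ≤ ‖b - s‖ + ‖c • a‖ := norm_sub_le _ _
      _ = ‖b - s‖ + c * ‖a‖ := by rw [norm_smul, Real.norm_of_nonneg hc]
      _ ≤ ‖b - s‖ + c := by nlinarith

/-- While the weighted slope stays above `η`, every descent step lowers the potential `P`
by a fixed amount, because `P` bounds `‖b - s‖`. -/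
theorem exists_mem_norm_comp_subtypeL_mul_le (hL : ∀ x y : E, ‖L x y‖ ≤ ‖x‖ * ‖y‖)
    (hsym : ∀ x y : E, L y x = L x y) (hb : ∀ s ∈ A, 0 ≤ qL L (b - s)) {η : ℝ} (hη : 0 < η) :
    ∃ s ∈ A, ‖(L (b - s)).comp A.subtypeL‖ * (1 + ‖b - s‖) ≤ η := by
  by_contra! hsteep
  let P : E → ℝ := fun s => qL L (b - s) + η / 4 * Real.log (1 + ‖b - s‖)
  have hP : ∀ s ∈ A, 0 ≤ P s := fun s hs =>
    add_nonneg (hb s hs) (mul_nonneg (by positivity)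
      (Real.log_nonneg (by linarith [norm_nonneg (b - s)])))
  set M := Real.exp (4 * P 0 / η)
  have hM : ∀ s ∈ A, P s ≤ P 0 → 1 + ‖b - s‖ ≤ M := by
    intro s hs hPs
    rw [← Real.log_le_iff_le_exp (by positivity), le_div_iff₀ hη]
    simp only [P] at hPs ⊢
    linarith [hb s hs]
  refine false_of_uniform_descent hP A.zero_mem (κ := (η / M) ^ 2 / 4) (by positivity) ?_
  intro s hs hPs
  set N := ‖b - s‖
  have hN : 0 < 1 + N := by positivity
  obtain ⟨s', hs', c, hc, hq', hN'⟩ := exists_descent_step hL hsym hs (ρ := η / (1 + N))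
    (by rw [div_lt_iff₀ hN]; exact hsteep s hs)
  have hlog : Real.log (1 + ‖b - s'‖) ≤ Real.log (1 + N) + c / (1 + N) :=
    (Real.log_le_log_add_sub_div hN (by positivity)).trans
      (by gcongr; linarith)
  have hηc : η / 4 * (c / (1 + N)) ≤ c ^ 2 / 4 :=
    calc η / 4 * (c / (1 + N)) = η / (1 + N) * c / 4 := by ring
      _ ≤ c * c / 4 := by gcongr; exact (div_pos hη hN).le.trans hc.le
      _ = c ^ 2 / 4 := by ring
  have hcM : (η / M) ^ 2 ≤ c ^ 2 := by
    have : η / M ≤ η / (1 + N) := div_le_div_of_nonneg_left hη.le hN (hM s hs hPs)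
    exact pow_le_pow_left₀ (by positivity) (this.trans hc.le) 2
  refine ⟨s', hs', ?_⟩
  simp only [P] at hPs ⊢
  nlinarith

end Descent

theorem ContinuousLinearMap.eq_zero_of_forall_mem_apply_lt {E : Type*} [AddCommGroup E]
    [Module ℝ E] [TopologicalSpace E] (f : StrongDual ℝ E) {A : Submodule ℝ E} {r : ℝ}
    (h : ∀ a ∈ A, f a < r) {a : E} (ha : a ∈ A) : f a = 0 := by
  by_contra hfa
  have := h ((r / f a) • a) (A.smul_mem _ ha)
  rw [map_smul, smul_eq_mul, div_mul_cancel₀ r hfa] at this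
  exact lt_irrefl r this

section Annihilator

variable {E : Type*} [NormedAddCommGroup E] [NormedSpace ℝ E] {A : Submodule ℝ E} {b : E}

theorem exists_mem_polarSubmodule_norm_le_one_apply_ne_zero (hA : IsClosed (A : Set E))
    (hb : b ∉ A) : ∃ u ∈ polarSubmodule ℝ A, ‖u‖ ≤ 1 ∧ u b ≠ 0 := by
  obtain ⟨f, r, hfA, hfb⟩ := geometric_hahn_banach_closed_point A.convex hA hb
  have hf0 : ∀ a ∈ A, f a = 0 := fun a ha => f.eq_zero_of_forall_mem_apply_lt hfA ha
  have hfb0 : f b ≠ 0 := by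
    have := hfA 0 A.zero_mem
    rw [map_zero] at this
    linarith
  have hf : f ≠ 0 := fun h => hfb0 (by simp [h])
  refine ⟨‖f‖⁻¹ • f, (mem_polarSubmodule ℝ A _).2 fun a ha => by simp [hf0 a ha], ?_, ?_⟩
  · rw [norm_smul, norm_inv, norm_norm, inv_mul_cancel₀ (norm_ne_zero_iff.2 hf)]
  · simpa [hf] using hfb0

variable {L : E →L[ℝ] StrongDual ℝ E} {Lt : StrongDual ℝ E →L[ℝ] StrongDual ℝ (StrongDual ℝ E)}

theorem exists_mem_polarSubmodule_approx_eval (hL : ∀ x y : E, ‖L x y‖ ≤ ‖x‖ * ‖y‖)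
    (hsym : ∀ x y : E, L y x = L x y) (hLt : ∀ p q : StrongDual ℝ E, ‖Lt p q‖ ≤ ‖p‖ * ‖q‖)
    (hsymt : ∀ p q : StrongDual ℝ E, Lt q p = Lt p q)
    (hdual : ∀ x : E, Lt (L x) = inclusionInDoubleDual ℝ E x)
    (hb : ∀ s ∈ A, 0 ≤ qL L (b - s)) {η : ℝ} (hη : 0 < η) :
    ∃ w ∈ polarSubmodule ℝ A, -(η + η ^ 2 / 2) ≤ qL Lt w ∧
      ∀ u ∈ polarSubmodule ℝ A, |Lt w u - u b| ≤ η * ‖u‖ := by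
  obtain ⟨s, hs, hsmall⟩ := exists_mem_norm_comp_subtypeL_mul_le hL hsym hb hη
  obtain ⟨e, he, he_norm⟩ := exists_extension_norm_eq A ((L (b - s)).comp A.subtypeL)
  have he_A : ∀ a ∈ A, e a = L (b - s) a := fun a ha => by simpa using he ⟨a, ha⟩
  have he_η : ‖e‖ ≤ η := by nlinarith [norm_nonneg e, norm_nonneg (b - s)]
  have he_b : ‖e‖ * ‖b - s‖ ≤ η := by nlinarith [norm_nonneg e, norm_nonneg (b - s)]
  have hLt_L : ∀ x : E, ∀ p : StrongDual ℝ E, Lt (L x) p = p x := fun x p => by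
    rw [hdual]; rfl
  refine ⟨L (b - s) - e, (mem_polarSubmodule ℝ A _).2 fun a ha => by simp [he_A a ha], ?_, ?_⟩
  · have hqw : qL Lt (L (b - s) - e) = qL L (b - s) - e (b - s) + qL Lt e := by
      rw [sub_eq_add_neg, ← neg_one_smul ℝ e, qL_add_smul hsymt, hLt_L]
      simp only [qL, hLt_L]
      ring
    have h1 : e (b - s) ≤ η :=
      (le_abs_self _).trans ((e.le_opNorm (b - s)).trans he_b)
    have h2 : -(η ^ 2 / 2) ≤ qL Lt e := by
      have := (abs_le.1 (abs_qL_le_s14 hLt e)).1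
      nlinarith [norm_nonneg e]
    linarith [hb s hs]
  · intro u hu
    have hus : u s = 0 := (mem_polarSubmodule ℝ A u).1 hu s hs
    rw [map_sub, sub_apply, hLt_L, map_sub, hus, sub_zero, sub_sub_cancel_left, abs_neg]
    calc |Lt e u| ≤ ‖e‖ * ‖u‖ := hLt e u
      _ ≤ η * ‖u‖ := by gcongr

theorem mem_of_forall_qL_sub_nonneg (hL : ∀ x y : E, ‖L x y‖ ≤ ‖x‖ * ‖y‖)
    (hsym : ∀ x y : E, L y x = L x y) (hLt : ∀ p q : StrongDual ℝ E, ‖Lt p q‖ ≤ ‖p‖ * ‖q‖)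
    (hsymt : ∀ p q : StrongDual ℝ E, Lt q p = Lt p q)
    (hdual : ∀ x : E, Lt (L x) = inclusionInDoubleDual ℝ E x) (hA : IsClosed (A : Set E))
    (hneg : ∀ w ∈ polarSubmodule ℝ A, qL Lt w ≤ 0) (hb : ∀ a ∈ A, 0 ≤ qL L (b - a)) :
    b ∈ A := by
  by_contra hbA
  obtain ⟨u, hu, hu1, hub⟩ := exists_mem_polarSubmodule_norm_le_one_apply_ne_zero hA hbA
  set d := |u b|
  have hd : 0 < d := abs_pos.2 hub
  set η := d ^ 2 / (4 * (1 + d))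
  have hη : 0 < η := by positivity
  have hηd : η < d := by
    rw [div_lt_iff₀ (by positivity)]
    nlinarith
  obtain ⟨w, hw, hqw, hwu⟩ := exists_mem_polarSubmodule_approx_eval hL hsym hLt hsymt hdual hb hη
  have hqu : -(1 / 2) ≤ qL Lt u := by
    have := (abs_le.1 (abs_qL_le_s14 hLt u)).1
    nlinarith [norm_nonneg u]
  have hdisc := sq_apply_le_four_mul_qL hsymt fun t =>
    hneg _ ((polarSubmodule ℝ A).add_mem hw ((polarSubmodule ℝ A).smul_mem t hu))
  have hβ : d - η ≤ |Lt w u| := by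
    have := (hwu u hu).trans (mul_le_of_le_one_right hη.le hu1)
    have := abs_sub_abs_le_abs_sub (u b) (Lt w u)
    rw [abs_sub_comm] at this
    linarith
  have hprod : 4 * qL Lt w * qL Lt u ≤ 2 * η + η ^ 2 := by
    nlinarith [hneg w hw, hneg u hu]
  have hsq : (d - η) ^ 2 ≤ (Lt w u) ^ 2 := by
    rw [← sq_abs (Lt w u)]
    exact pow_le_pow_left₀ (by linarith) hβ 2
  have hηdef : η * (4 * (1 + d)) = d ^ 2 := div_mul_cancel₀ _ (by positivity)
  nlinarith

end Annihilator

theorem stmt14_general {B : Type*} [NormedAddCommGroup B] [NormedSpace ℝ B]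
    (L : B →L[ℝ] StrongDual ℝ B) (hL : ‖L‖ ≤ 1)
    (hsym : ∀ b c : B, L c b = L b c)
    (Lt : StrongDual ℝ B →L[ℝ] StrongDual ℝ (StrongDual ℝ B)) (hLt : @norm _ (ContinuousLinearMap.hasOpNorm (E := StrongDual ℝ B) (F := StrongDual ℝ (StrongDual ℝ B)) (σ₁₂ := RingHom.id ℝ)) Lt ≤ 1)
    (hsymt : ∀ p q : StrongDual ℝ B, Lt q p = Lt p q)
    (hdual : ∀ b : B, Lt (L b) = inclusionInDoubleDual ℝ B b)
    (A : Subspace ℝ B) (hclosed : IsClosed (A : Set B))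
    (hpos : ∀ a ∈ A, 0 ≤ qL L a)
    (hneg : ∀ b' : StrongDual ℝ B, (∀ a ∈ A, b' a = 0) → qL Lt b' ≤ 0) :
    MaxLPositive L (A : Set B) := by
  refine ⟨⟨⟨0, A.zero_mem⟩, fun x hx y hy => hpos _ (A.sub_mem hx hy)⟩, fun A' hA' hAA' => ?_⟩
  refine Set.Subset.antisymm (fun b hb => ?_) hAA'
  exact mem_of_forall_qL_sub_nonneg (L.norm_apply_apply_le_of_norm_le_one hL) hsym
    (Lt.norm_apply_apply_le_of_norm_le_one hLt) hsymt hdual hclosed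
    (fun w hw => hneg w ((mem_polarSubmodule ℝ A w).1 hw)) fun a ha => hA'.2 b hb a (hAA' ha)

theorem stmt14 {B : Type*} [NormedAddCommGroup B] [NormedSpace ℝ B] [CompleteSpace B]
    [Nontrivial B]
    (L : B →L[ℝ] StrongDual ℝ B) (hL : ‖L‖ ≤ 1)
    (hsym : ∀ b c : B, L c b = L b c)
    (Lt : StrongDual ℝ B →L[ℝ] StrongDual ℝ (StrongDual ℝ B)) (hLt : @norm _ (ContinuousLinearMap.hasOpNorm (E := StrongDual ℝ B) (F := StrongDual ℝ (StrongDual ℝ B)) (σ₁₂ := RingHom.id ℝ)) Lt ≤ 1)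
    (hsymt : ∀ p q : StrongDual ℝ B, Lt q p = Lt p q)
    (hdual : ∀ b : B, Lt (L b) = inclusionInDoubleDual ℝ B b)
    (A : Subspace ℝ B) (hclosed : IsClosed (A : Set B))
    (hpos : ∀ a ∈ A, 0 ≤ qL L a)
    (hneg : ∀ b' : StrongDual ℝ B, (∀ a ∈ A, b' a = 0) → qL Lt b' ≤ 0) :
    MaxLPositive L (A : Set B) :=
  stmt14_general L hL hsym Lt hLt hsymt hdual A hclosed hpos hneg
end
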